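/- For n ≥ 1, the matrix V_n := P·(H ⊗ I^{⊗(n-1)}) satisfies V_n^n = H^{⊗n}, where P is the permutation matrix of the cyclic shift of qubits sending the basis state |a₁a₂...aₙ⟩ to |aₙa₁...a_{n-1}⟩. -/

import Mathlib

open Matrix

noncomputable section

/-- The 2×2 Hadamard matrix. -/
def Hm : Matrix (Fin 2) (Fin 2) ℝ :=
  !![1/Real.sqrt 2, 1/Real.sqrt 2; 1/Real.sqrt 2, -(1/Real.sqrt 2)]

/-- The Pauli X matrix. -/
def Xm : Matrix (Fin 2) (Fin 2) ℝ := !![0, 1; 1, 0]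

/-- The Pauli Z matrix. -/
def Zm : Matrix (Fin 2) (Fin 2) ℝ := !![1, 0; 0, -1]

/-- n-fold Kronecker (tensor) power of a 2×2 matrix, with basis indexed by
bit strings `Fin n → Fin 2` (position 0 = first/most significant qubit). -/
def tpow (M : Matrix (Fin 2) (Fin 2) ℝ) (n : ℕ) :
    Matrix (Fin n → Fin 2) (Fin n → Fin 2) ℝ :=
  Matrix.of fun x y => ∏ i, M (x i) (y i)

/-- The 2×2 matrix `M` acting on qubit `p`, identity on all other qubits. -/
def gateAt (M : Matrix (Fin 2) (Fin 2) ℝ) {n : ℕ} (p : Fin n) :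
    Matrix (Fin n → Fin 2) (Fin n → Fin 2) ℝ :=
  Matrix.of fun x y =>
    M (x p) (y p) * ∏ i ∈ Finset.univ.erase p, (if x i = y i then (1 : ℝ) else 0)

/-- The cyclic shift of the tensor factors on bit strings: `shiftFun n a`
reads position `i+1` of `a` at position `i`. -/
def shiftFun (n : ℕ) : (Fin (n + 1) → Fin 2) → (Fin (n + 1) → Fin 2) :=
  fun a i => a (i + 1)

/-- The permutation matrix of the cyclic shift of the qubits
`|a₁a₂…aₙ⟩ ↦ |aₙa₁…a_{n-1}⟩` (the row indexed by `x` has its 1 in the column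
indexed by `shiftFun n x`, i.e. the basis vector of `x₂…xₙx₁` is sent to the
basis vector of `x`); this is the permutation `(1,3,…,2ⁿ−1,2,4,…,2ⁿ)`. -/
def Pshift (n : ℕ) : Matrix (Fin (n + 1) → Fin 2) (Fin (n + 1) → Fin 2) ℝ :=
  Matrix.of fun x y => if x = shiftFun n y then 1 else 0

/-- The matrix `V_{n+1} = P · (H ⊗ I^{⊗ n})` on `n+1` qubits. -/
def Vmat (n : ℕ) : Matrix (Fin (n + 1) → Fin 2) (Fin (n + 1) → Fin 2) ℝ :=
  Pshift n * gateAt Hm (0 : Fin (n + 1))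

/-- `P_n(i)`: diagonal matrix with `-1` at the basis vector indexed by `i`
and `+1` elsewhere. -/
def PnDiag {n : ℕ} (i : Fin n → Fin 2) :
    Matrix (Fin n → Fin 2) (Fin n → Fin 2) ℝ :=
  Matrix.diagonal fun x => if x = i then -1 else 1

/-!
Write `V = P G` with `G = H ⊗ I ⊗ ⋯ ⊗ I`. Multiplying a tensor product of one-qubit gates by
the cyclic shift `P` on the right moves every factor one qubit along:
`(⊗ᵢ fᵢ) P = P (⊗ᵢ f_{i-1})`. Pushing the `P`s of `(P G)^k` to the left in this way gives
`V^k = P^k (H ⊗ ⋯ ⊗ H ⊗ I ⊗ ⋯ ⊗ I)` with `H` on the first `k` qubits, as long as `k ≤ n`.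
For `k = n` every qubit carries an `H`, and `P^n = 1`.
-/

namespace Matrix

variable {ι α R : Type*} [Fintype ι] [CommSemiring R]

def kroneckerPi (f : ι → Matrix α α R) : Matrix (ι → α) (ι → α) R :=
  of fun x y => ∏ i, f i (x i) (y i)

theorem kroneckerPi_mul [DecidableEq ι] [Fintype α] (f g : ι → Matrix α α R) :
    kroneckerPi f * kroneckerPi g = kroneckerPi (f * g) := by
  ext x y
  simp only [kroneckerPi, mul_apply, of_apply, Pi.mul_apply, ← Finset.prod_mul_distrib,
    Fintype.prod_sum]

theorem kroneckerPi_one [DecidableEq α] : kroneckerPi (1 : ι → Matrix α α R) = 1 := by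
  ext x y
  simp [kroneckerPi, one_apply, Fintype.prod_boole, funext_iff]

end Matrix

open Fin.NatCast

section FirstCoords

variable {M : Type*} [Monoid M] {n : ℕ}

def firstCoords (k : ℕ) (a : M) : Fin n → M := fun i => if (i : ℕ) < k then a else 1

theorem firstCoords_zero (a : M) : firstCoords 0 a = (1 : Fin n → M) := rfl

theorem firstCoords_succ {k : ℕ} (hk : k ≤ n) (a : M) :
    firstCoords (k + 1) a =
      (fun i : Fin (n + 1) => firstCoords k a (i - 1)) * Pi.mulSingle 0 a := by
  funext i
  rcases eq_or_ne i 0 with rfl | hi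
  · simp [firstCoords, Fin.coe_sub_one, hk.not_gt]
  · have hi' : (i : ℕ) ≠ 0 := Fin.val_ne_iff.2 hi
    simp only [firstCoords, Pi.mul_apply, Pi.mulSingle_eq_of_ne hi, mul_one,
      Fin.val_sub_one_of_ne_zero hi]
    exact if_congr (by omega) rfl rfl

end FirstCoords

theorem tpow_eq_kroneckerPi (M : Matrix (Fin 2) (Fin 2) ℝ) (n : ℕ) :
    tpow M n = kroneckerPi fun _ => M := rfl

theorem gateAt_eq_kroneckerPi (M : Matrix (Fin 2) (Fin 2) ℝ) {n : ℕ} (p : Fin n) :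
    gateAt M p = kroneckerPi (Pi.mulSingle p M) := by
  ext x y
  rw [kroneckerPi, of_apply, ← Finset.mul_prod_erase _ _ (Finset.mem_univ p)]
  refine congrArg₂ _ (by simp) (Finset.prod_congr rfl fun i hi => ?_)
  simp [Pi.mulSingle_eq_of_ne (Finset.ne_of_mem_erase hi), one_apply]

section Pshift

variable {n : ℕ}

theorem mul_Pshift (A : Matrix (Fin (n + 1) → Fin 2) (Fin (n + 1) → Fin 2) ℝ) :
    A * Pshift n = A.submatrix id (shiftFun n) := by
  ext x y
  simp [Pshift, mul_apply]

theorem Pshift_mul (A : Matrix (Fin (n + 1) → Fin 2) (Fin (n + 1) → Fin 2) ℝ) :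
    Pshift n * A = A.submatrix (fun x j => x (j - 1)) id := by
  ext x y
  have hx : ∀ z, x = shiftFun n z ↔ z = fun j => x (j - 1) := fun z => by
    simp only [funext_iff, shiftFun]
    exact ⟨fun h j => by simpa using (h (j - 1)).symm, fun h i => by simp [h]⟩
  simp [Pshift, mul_apply, hx]

theorem Pshift_pow (k : ℕ) :
    Pshift n ^ k =
      (1 : Matrix (Fin (n + 1) → Fin 2) (Fin (n + 1) → Fin 2) ℝ).submatrix id
        fun y j => y (j + k) := by
  induction k with
  | zero =>
    simp only [pow_zero, Nat.cast_zero, add_zero]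
    exact (submatrix_id_id 1).symm
  | succ k ih =>
    rw [pow_succ, ih, mul_Pshift, submatrix_submatrix]
    congr 2
    funext y j
    simp [shiftFun, add_assoc]

theorem Pshift_pow_succ_self : Pshift n ^ (n + 1) = 1 := by
  simp only [Pshift_pow, Fin.natCast_self, add_zero]
  exact submatrix_id_id 1

theorem kroneckerPi_mul_Pshift (f : Fin (n + 1) → Matrix (Fin 2) (Fin 2) ℝ) :
    kroneckerPi f * Pshift n = Pshift n * kroneckerPi fun i => f (i - 1) := by
  rw [mul_Pshift, Pshift_mul]
  ext x y
  simp only [kroneckerPi, submatrix_apply, of_apply, id, shiftFun]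
  exact (Fintype.prod_equiv (Equiv.addRight 1) _ _ fun i => by simp)

end Pshift

theorem Vmat_pow {n k : ℕ} (hk : k ≤ n + 1) :
    Vmat n ^ k = Pshift n ^ k * kroneckerPi (firstCoords k Hm) := by
  induction k with
  | zero => rw [pow_zero, pow_zero, firstCoords_zero, kroneckerPi_one, one_mul]
  | succ k ih =>
    calc Vmat n ^ (k + 1)
        = Pshift n ^ k * (kroneckerPi (firstCoords k Hm) * Pshift n) *
            kroneckerPi (Pi.mulSingle 0 Hm) := by
          rw [pow_succ, ih (by omega), Vmat, gateAt_eq_kroneckerPi]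
          simp only [mul_assoc]
      _ = Pshift n ^ (k + 1) *
            kroneckerPi ((fun i => firstCoords k Hm (i - 1)) * Pi.mulSingle 0 Hm) := by
          rw [kroneckerPi_mul_Pshift, ← kroneckerPi_mul, pow_succ]
          simp only [mul_assoc]
      _ = Pshift n ^ (k + 1) * kroneckerPi (firstCoords (k + 1) Hm) := by
          rw [firstCoords_succ (by omega)]

/-- for every n ≥ 1 (written n+1), `V_n^n = H^{⊗n}`. -/
theorem Vmat_pow_eq_tpow_hadamard (n : ℕ) :
    Vmat n ^ (n + 1) = tpow Hm (n + 1) := by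
  have hall : firstCoords (n + 1) Hm = fun _ : Fin (n + 1) => Hm := funext fun i => if_pos i.isLt
  rw [Vmat_pow le_rfl, Pshift_pow_succ_self, one_mul, hall, tpow_eq_kroneckerPi]
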